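/- For integer p ≥ 2, the derivatives of the Kress map w(s) = 2π v(s)^p/(v(s)^p + v(2π−s)^p) vanish to order p − 1 at the endpoints: w^{(q)}(0) = w^{(q)}(2π) = 0 for all 1 ≤ q ≤ p − 1. -/

import Mathlib

noncomputable section

open Real

/-- The cubic polynomial in the Kress change of variable (integer parameter `p`). -/
def kressV (p : ℕ) (s : ℝ) : ℝ :=
  (1 / (p : ℝ) - 1 / 2) * ((Real.pi - s) / Real.pi) ^ 3
    + (1 / (p : ℝ)) * (s - Real.pi) / Real.pi + 1 / 2

/-- The Kress change of variable `w(s) = 2π v(s)^p / (v(s)^p + v(2π−s)^p)`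
with natural-number exponent. -/
def kressW (p : ℕ) (s : ℝ) : ℝ :=
  2 * Real.pi * (kressV p s) ^ p / ((kressV p s) ^ p + (kressV p (2 * Real.pi - s)) ^ p)

/-!
Since `v(0) = 0`, the cubic factors as `v(s) = s * u(s)`, so `w(s) = s^p * g(s)` with
`g = 2π u^p / D` smooth near `0` (the denominator `D` equals `1` there). Symmetrically,
`w = 2π - 2π v(2π - ·)^p / D` wherever `D ≠ 0`, so near `2π` we have
`w(s) = 2π + (s - 2π)^p * h(s)` with `h` smooth. By Leibniz's rule, every derivative of order
`1 ≤ q < p` of such a function vanishes at the base point, because the derivatives of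
`(s - a)^p` of order `< p` vanish at `a`.
-/

open Filter Topology

section VanishingOrder

variable {𝕜 : Type*} [NontriviallyNormedField 𝕜]

theorem iteratedDeriv_sub_pow_eq_zero {p i : ℕ} (a : 𝕜) (hip : i < p) :
    iteratedDeriv i (fun t => (t - a) ^ p) a = 0 := by
  rw [iteratedDeriv_comp_sub_const i (· ^ p) a]
  simp [Nat.sub_ne_zero_of_lt hip]

theorem iteratedDeriv_sub_pow_mul_eq_zero {p q : ℕ} {a : 𝕜} {g : 𝕜 → 𝕜}
    (hg : ContDiffAt 𝕜 q g a) (hqp : q < p) :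
    iteratedDeriv q (fun t => (t - a) ^ p * g t) a = 0 := by
  rw [iteratedDeriv_fun_mul (by fun_prop) hg]
  refine Finset.sum_eq_zero fun i hi => ?_
  rw [iteratedDeriv_sub_pow_eq_zero a (by grind), mul_zero, zero_mul]

theorem iteratedDeriv_eq_zero_of_eventuallyEq_const_add_sub_pow_mul {p q : ℕ} {a c : 𝕜}
    {f g : 𝕜 → 𝕜} (hf : f =ᶠ[𝓝 a] fun t => c + (t - a) ^ p * g t) (hg : ContDiffAt 𝕜 q g a)
    (hq : 0 < q) (hqp : q < p) :
    iteratedDeriv q f a = 0 := by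
  rw [hf.iteratedDeriv_eq, iteratedDeriv_const_add hq,
    iteratedDeriv_sub_pow_mul_eq_zero hg hqp]

end VanishingOrder

def kressU (p : ℕ) (s : ℝ) : ℝ :=
  (1 / (p : ℝ) - 1 / 2) * (-(3 * π ^ 2 - 3 * π * s + s ^ 2) / π ^ 3) + 1 / ((p : ℝ) * π)

def kressDenom (p : ℕ) (s : ℝ) : ℝ :=
  kressV p s ^ p + kressV p (2 * π - s) ^ p

theorem kressV_eq_mul_kressU (p : ℕ) (s : ℝ) : kressV p s = s * kressU p s := by
  unfold kressV kressU
  field_simp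
  ring

theorem kressV_two_pi (p : ℕ) : kressV p (2 * π) = 1 := by
  unfold kressV
  field_simp
  ring

theorem kressDenom_zero {p : ℕ} (hp : p ≠ 0) : kressDenom p 0 = 1 := by
  simp [kressDenom, kressV_eq_mul_kressU p 0, kressV_two_pi, hp]

theorem kressDenom_two_pi {p : ℕ} (hp : p ≠ 0) : kressDenom p (2 * π) = 1 := by
  simp [kressDenom, kressV_eq_mul_kressU p 0, kressV_two_pi, hp]

theorem contDiff_kressU (p : ℕ) {n : WithTop ℕ∞} : ContDiff ℝ n (kressU p) := by
  unfold kressU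
  fun_prop

theorem contDiff_kressDenom (p : ℕ) {n : WithTop ℕ∞} : ContDiff ℝ n (kressDenom p) := by
  unfold kressDenom kressV
  fun_prop

theorem kressW_eq_pow_mul (p : ℕ) (s : ℝ) :
    kressW p s = s ^ p * (2 * π * kressU p s ^ p / kressDenom p s) := by
  rw [kressW, ← kressDenom, kressV_eq_mul_kressU]
  ring

theorem kressW_eq_two_pi_add_sub_pow_mul {p : ℕ} {s : ℝ} (hs : kressDenom p s ≠ 0) :
    kressW p s =
      2 * π + (s - 2 * π) ^ p * (-(2 * π) * (-kressU p (2 * π - s)) ^ p / kressDenom p s) := by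
  have hsum : kressV p s ^ p = kressDenom p s - kressV p (2 * π - s) ^ p := by
    rw [kressDenom]; ring
  rw [kressW, ← kressDenom, hsum, kressV_eq_mul_kressU p (2 * π - s),
    show (2 * π - s) * kressU p (2 * π - s) = (s - 2 * π) * -kressU p (2 * π - s) by ring,
    mul_pow]
  field_simp
  ring

theorem stmt_15_general (p : ℕ) :
    ∀ q : ℕ, 1 ≤ q → q ≤ p - 1 →
      iteratedDeriv q (kressW p) 0 = 0 ∧
        iteratedDeriv q (kressW p) (2 * Real.pi) = 0 := by
  intro q hq hqp
  have hp : p ≠ 0 := by omega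
  replace hqp : q < p := by omega
  have hU := contDiff_kressU p (n := q)
  have hD₀ : kressDenom p 0 ≠ 0 := by simp [kressDenom_zero hp]
  have hD₂ : kressDenom p (2 * π) ≠ 0 := by simp [kressDenom_two_pi hp]
  constructor
  · refine iteratedDeriv_eq_zero_of_eventuallyEq_const_add_sub_pow_mul (c := 0)
      (g := fun s => 2 * π * kressU p s ^ p / kressDenom p s)
      (.of_forall fun s => by simp [kressW_eq_pow_mul]) ?_ hq hqp
    exact (by fun_prop : ContDiff ℝ q fun s => 2 * π * kressU p s ^ p).contDiffAt.div
      (contDiff_kressDenom p).contDiffAt hD₀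
  · refine iteratedDeriv_eq_zero_of_eventuallyEq_const_add_sub_pow_mul
      (((contDiff_kressDenom p (n := 0)).continuous.continuousAt.eventually_ne hD₂).mono
        fun s hs => kressW_eq_two_pi_add_sub_pow_mul hs) ?_ hq hqp
    exact (by fun_prop : ContDiff ℝ q fun s => -(2 * π) * (-kressU p (2 * π - s)) ^ p)
      |>.contDiffAt.div (contDiff_kressDenom p).contDiffAt hD₂

theorem stmt_15 (p : ℕ) (hp : 2 ≤ p) :
    ∀ q : ℕ, 1 ≤ q → q ≤ p - 1 →
      iteratedDeriv q (kressW p) 0 = 0 ∧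
        iteratedDeriv q (kressW p) (2 * Real.pi) = 0 :=
  stmt_15_general p
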